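/- arXiv:2507.03824 — 5 statements merged into one kernel-verified Lean document; each statement's English description precedes it below -/
import Mathlib

section
/- Let q be a primitive k-th root of unity and let b, z be complex numbers with b ≠ 0. Then ∑_{n=0}^{k-1} (b;q)_n z^n = b^{k-1} ∑_{n=0}^{k-1} (b;q)_n (q/z;q)_n (z/b)^n q^{-n²-n}, where (a;q)_n := ∏_{j=0}^{n-1}(1 - a q^j). -/
/-!
Both sides are polynomials in `z` of degree `< k`: on the right,
`(q/z;q)_n z^n = ∏_{j<n} (z - q^{j+1})`. Put `D F (z) = b z F(qz) - (z - 1) F(z)`. Telescoping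
gives `D F = 1 - (b;q)_k z^k` for the left side and, through the recurrence
`c_{n+1} b q^{2n+2} = c_n (1 - b q^n)` of the coefficients `c_n = (b;q)_n b^{-n} q^{-n²-n}`, the
same value for the right side, because `(b;q)_k = 1 - b^k`, `q^k = 1` and
`∏_{j<k} (z - q^j) = z^k - 1`. So the difference `G` of the two sides satisfies
`b z G(qz) = (z - 1) G(z)`; taking `z = 1, q, q², …` shows that `G` vanishes at all `k`-th roots
of unity, hence `G = 0`.
-/

open Finset Polynomial

section CommRing

variable {R : Type*} [CommRing R]

def qPochhammer (a q : R) (n : ℕ) : R := ∏ j ∈ range n, (1 - a * q ^ j)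

theorem qPochhammer_succ (a q : R) (n : ℕ) :
    qPochhammer a q (n + 1) = qPochhammer a q n * (1 - a * q ^ n) :=
  prod_range_succ _ _

def qDiff (b q : R) (f : R → R) (z : R) : R := b * z * f (q * z) - (z - 1) * f z

noncomputable def pochhammerSeries (b q : R) (k : ℕ) : R[X] :=
  ∑ n ∈ range k, C (qPochhammer b q n) * X ^ n

theorem eval_pochhammerSeries (b q : R) (k : ℕ) (z : R) :
    (pochhammerSeries b q k).eval z = ∑ n ∈ range k, qPochhammer b q n * z ^ n := by
  simp [pochhammerSeries, eval_finsetSum]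

theorem degree_pochhammerSeries_lt (b q : R) (k : ℕ) :
    (pochhammerSeries b q k).degree < k := by
  rw [← mem_degreeLT]
  refine Submodule.sum_mem _ fun n hn => mem_degreeLT.2 ?_
  exact (degree_C_mul_X_pow_le n _).trans_lt (by exact_mod_cast mem_range.1 hn)

theorem qDiff_eval_pochhammerSeries (b q : R) (k : ℕ) (z : R) :
    qDiff b q (pochhammerSeries b q k).eval z = 1 - qPochhammer b q k * z ^ k := by
  induction k with
  | zero => simp [qDiff, pochhammerSeries, qPochhammer]
  | succ k ih =>
    simp only [qDiff, eval_pochhammerSeries, sum_range_succ] at ih ⊢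
    rw [qPochhammer_succ]
    linear_combination ih

theorem prod_range_mul_sub_pow_succ (q z : R) (n : ℕ) :
    ∏ j ∈ range n, (q * z - q ^ (j + 1)) = q ^ n * ∏ j ∈ range n, (z - q ^ j) := by
  rw [← card_range n, ← prod_const, card_range, ← prod_mul_distrib]
  exact prod_congr rfl fun j _ => by ring

theorem sub_one_mul_prod_range_sub_pow_succ (q z : R) (n : ℕ) :
    (z - 1) * ∏ j ∈ range n, (z - q ^ (j + 1)) = ∏ j ∈ range (n + 1), (z - q ^ j) := by
  rw [prod_range_succ', pow_zero, mul_comm]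

end CommRing

section Domain

variable {R : Type*} [CommRing R] [IsDomain R] {k : ℕ} {q : R}

theorem IsPrimitiveRoot.prod_range_sub_pow_mul (hq : IsPrimitiveRoot q k) (hk : 0 < k) (z a : R) :
    ∏ j ∈ range k, (z - q ^ j * a) = z ^ k - a ^ k := by
  simpa [eval_prod] using congrArg (eval z) (X_pow_sub_C_eq_prod hq hk (rfl : a ^ k = a ^ k)).symm

theorem qPochhammer_of_isPrimitiveRoot (hq : IsPrimitiveRoot q k) (hk : 0 < k) (b : R) :
    qPochhammer b q k = 1 - b ^ k := by
  rw [← one_pow k, ← hq.prod_range_sub_pow_mul hk 1 b]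
  exact prod_congr rfl fun j _ => by ring

theorem eval_pow_succ_eq_of_qDiff_eq {b : R} (hb : b ≠ 0) (hq : q ≠ 0) {f g : R → R}
    (h : ∀ z, qDiff b q f z = qDiff b q g z) (m : ℕ) : f (q ^ (m + 1)) = g (q ^ (m + 1)) := by
  induction m with
  | zero => simpa [qDiff, hb] using h 1
  | succ m ih =>
    have hm := h (q ^ (m + 1))
    simp only [qDiff, ih, ← pow_succ'] at hm
    exact mul_left_cancel₀ (mul_ne_zero hb (pow_ne_zero _ hq)) (sub_left_injective hm)

theorem eq_of_qDiff_eval_eq (hq : IsPrimitiveRoot q k) {b : R} (hb : b ≠ 0) {F G : R[X]}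
    (hF : F.degree < k) (hG : G.degree < k) (h : ∀ z, qDiff b q F.eval z = qDiff b q G.eval z) :
    F = G := by
  classical
  have hcard : #((range k).image (q ^ ·)) = k :=
    (card_image_of_injOn fun i hi j hj => hq.pow_inj (mem_range.1 hi) (mem_range.1 hj)).trans
      (card_range k)
  refine eq_of_degrees_lt_of_eval_finset_eq _ (by rwa [hcard]) (by rwa [hcard]) ?_
  simp only [mem_image, mem_range, forall_exists_index, and_imp, forall_apply_eq_imp_iff₂]
  intro i hi
  have hqi : q ^ i = q ^ ((i + k - 1) + 1) := by
    rw [Nat.sub_add_cancel (by omega), pow_add, hq.pow_eq_one, mul_one]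
  rw [hqi]
  exact eval_pow_succ_eq_of_qDiff_eq hb (hq.ne_zero (by omega)) h _

end Domain

section Field

variable {K : Type*} [Field K]

noncomputable def lovejoyCoeff (b q : K) (n : ℕ) : K :=
  qPochhammer b q n / (b ^ n * q ^ (n ^ 2 + n))

theorem lovejoyCoeff_succ_mul {b q : K} (hb : b ≠ 0) (hq : q ≠ 0) (n : ℕ) :
    lovejoyCoeff b q (n + 1) * (b * q ^ (2 * n + 2)) = lovejoyCoeff b q n * (1 - b * q ^ n) := by
  rw [lovejoyCoeff, lovejoyCoeff, qPochhammer_succ]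
  field_simp
  ring

/-- Evaluated at `z ≠ 0`, the `n`-th summand is the `n`-th term
`(b;q)_n (q/z;q)_n (z/b)^n q^{-n²-n}` of the right-hand side of Lovejoy's identity. -/
noncomputable def lovejoySeries (b q : K) (k : ℕ) : K[X] :=
  ∑ n ∈ range k, C (lovejoyCoeff b q n) * ∏ j ∈ range n, (X - C (q ^ (j + 1)))

theorem eval_lovejoySeries (b q : K) (k : ℕ) (z : K) :
    (lovejoySeries b q k).eval z =
      ∑ n ∈ range k, lovejoyCoeff b q n * ∏ j ∈ range n, (z - q ^ (j + 1)) := by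
  simp [lovejoySeries, eval_finsetSum, eval_prod]

theorem degree_lovejoySeries_lt (b q : K) (k : ℕ) : (lovejoySeries b q k).degree < k := by
  rw [← mem_degreeLT]
  refine Submodule.sum_mem _ fun n hn => mem_degreeLT.2 ?_
  refine degree_le_natDegree.trans_lt (Nat.cast_lt.2 ((natDegree_C_mul_le _ _).trans_lt ?_))
  rw [natDegree_finsetProd_X_sub_C_eq_card, card_range]
  exact mem_range.1 hn

theorem qDiff_eval_lovejoySeries {b q : K} (hb : b ≠ 0) (hq : q ≠ 0) (k : ℕ) (z : K) :
    qDiff b q (lovejoySeries b q k).eval z =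
      b - b * lovejoyCoeff b q k * q ^ (2 * k) * ∏ j ∈ range k, (z - q ^ j) := by
  induction k with
  | zero => simp [qDiff, lovejoySeries, lovejoyCoeff, qPochhammer]
  | succ k ih =>
    simp only [qDiff, eval_lovejoySeries, sum_range_succ] at ih ⊢
    have hrec := lovejoyCoeff_succ_mul hb hq k
    have hshift := sub_one_mul_prod_range_sub_pow_succ q z k
    rw [prod_range_mul_sub_pow_succ, prod_range_succ (fun j => z - q ^ j)]
    rw [prod_range_succ (fun j => z - q ^ j)] at hshift
    linear_combination ih + (∏ j ∈ range k, (z - q ^ j)) * (z - q ^ k) * hrec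
      - lovejoyCoeff b q k * hshift

theorem qDiff_eval_C_mul_lovejoySeries_of_isPrimitiveRoot {k : ℕ} {b q : K}
    (hq : IsPrimitiveRoot q k) (hk : 0 < k) (hb : b ≠ 0) (z : K) :
    qDiff b q (C (b ^ (k - 1)) * lovejoySeries b q k).eval z = 1 - (1 - b ^ k) * z ^ k := by
  have h := qDiff_eval_lovejoySeries hb (hq.ne_zero hk.ne') k z
  have hqk : q ^ (k ^ 2 + k) = 1 := by
    rw [show k ^ 2 + k = k * (k + 1) by ring, pow_mul, hq.pow_eq_one, one_pow]
  have hc : lovejoyCoeff b q k * b ^ k = 1 - b ^ k := by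
    rw [lovejoyCoeff, qPochhammer_of_isPrimitiveRoot hq hk, hqk]
    field_simp
  have hprod : ∏ j ∈ range k, (z - q ^ j) = z ^ k - 1 := by
    simpa using hq.prod_range_sub_pow_mul hk z 1
  have hbk : b ^ (k - 1) * b = b ^ k := pow_sub_one_mul hk.ne' b
  rw [hprod, pow_mul', hq.pow_eq_one, one_pow] at h
  simp only [qDiff, eval_mul, eval_C] at h ⊢
  linear_combination b ^ (k - 1) * h + (1 - lovejoyCoeff b q k * (z ^ k - 1)) * hbk
    - (z ^ k - 1) * hc

theorem qPochhammer_div_mul_pow {z : K} (hz : z ≠ 0) (q : K) (n : ℕ) :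
    qPochhammer (q / z) q n * z ^ n = ∏ j ∈ range n, (z - q ^ (j + 1)) := by
  rw [qPochhammer, ← card_range n, ← prod_const, card_range, ← prod_mul_distrib]
  exact prod_congr rfl fun j _ => by field_simp; ring

end Field

theorem lovejoy_polynomial_identity (k : ℕ) (q b z : ℂ)
    (hq : IsPrimitiveRoot q k) (hb : b ≠ 0) (hz : z ≠ 0) :
    ∑ n ∈ Finset.range k, (∏ j ∈ Finset.range n, (1 - b * q ^ j)) * z ^ n =
      b ^ (k - 1) * ∑ n ∈ Finset.range k,
        (∏ j ∈ Finset.range n, (1 - b * q ^ j)) *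
        (∏ j ∈ Finset.range n, (1 - (q / z) * q ^ j)) *
        (z / b) ^ n * (q ^ (n ^ 2 + n))⁻¹ := by
  rcases k.eq_zero_or_pos with rfl | hk
  · simp
  have hseries : pochhammerSeries b q k = C (b ^ (k - 1)) * lovejoySeries b q k := by
    refine eq_of_qDiff_eval_eq hq hb (degree_pochhammerSeries_lt b q k) ?_ fun w => ?_
    · exact (degree_C_mul (pow_ne_zero _ hb)).trans_lt (degree_lovejoySeries_lt b q k)
    · rw [qDiff_eval_pochhammerSeries, qPochhammer_of_isPrimitiveRoot hq hk,
        qDiff_eval_C_mul_lovejoySeries_of_isPrimitiveRoot hq hk hb]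
  have h := congrArg (eval z) hseries
  rw [eval_pochhammerSeries, eval_mul, eval_C, eval_lovejoySeries] at h
  refine h.trans (congrArg _ (sum_congr rfl fun n _ => ?_))
  rw [← qPochhammer_div_mul_pow hz, lovejoyCoeff, qPochhammer, qPochhammer]
  ring
end

section
/- Let q be a primitive k-th root of unity with k even, and let b be a nonzero complex number with b^k ≠ 1. Then ∑_{n=0}^{k-1} (b;q²)_n (-b^{-1}q²)^n = (1 + (-b^{-1})^{k/2}(1 - b^{k/2})) · ∑_{n=0}^{k/2 - 1} (b;q²)_n (-b^{-1}q²)^n, where (a;q²)_n := ∏_{j=0}^{n-1}(1 - a q^{2j}). -/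
/-! Since `q²` is a primitive `k/2`-th root of unity, `(b; q²)_{s + k/2} = (1 - b^{k/2}) (b; q²)_s`
and `(q²)^{k/2} = 1`, so the terms with `n ≥ k/2` of the sum are the terms with `n < k/2`
multiplied by `(-b⁻¹)^{k/2} (1 - b^{k/2})`. -/

open Finset Polynomial

variable {R : Type*} [CommRing R]

theorem qPochhammer_add (a q : R) (m n : ℕ) :
    qPochhammer a q (m + n) = qPochhammer a q m * qPochhammer (a * q ^ m) q n := by
  simp only [qPochhammer, prod_range_add, pow_add, mul_assoc]

theorem IsPrimitiveRoot.qPochhammer_self [IsDomain R] {q : R} {n : ℕ}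
    (hq : IsPrimitiveRoot q n) (hn : 0 < n) (a : R) : qPochhammer a q n = 1 - a ^ n := by
  have h := congr_arg (eval 1) (X_pow_sub_C_eq_prod hq hn (rfl : a ^ n = a ^ n))
  simpa [qPochhammer, eval_prod, mul_comm] using h.symm

theorem sum_range_add_self_qPochhammer_mul_pow {q : R} {m : ℕ} (hq : q ^ m = 1) (a c : R) :
    ∑ n ∈ range (m + m), qPochhammer a q n * (c * q) ^ n =
      (1 + c ^ m * qPochhammer a q m) * ∑ n ∈ range m, qPochhammer a q n * (c * q) ^ n := by
  rw [sum_range_add, add_mul, one_mul, mul_sum]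
  congr 1
  refine sum_congr rfl fun n _ => ?_
  rw [qPochhammer_add, hq, mul_one, pow_add, mul_pow c q m, hq]
  ring

theorem truncation_split_general (k : ℕ) (q b : ℂ)
    (hq : IsPrimitiveRoot q k) (hk : Even k) :
    ∑ n ∈ Finset.range k,
        (∏ j ∈ Finset.range n, (1 - b * q ^ (2 * j))) * (-b⁻¹ * q ^ 2) ^ n =
      (1 + (-b⁻¹) ^ (k / 2) * (1 - b ^ (k / 2))) *
        ∑ n ∈ Finset.range (k / 2),
          (∏ j ∈ Finset.range n, (1 - b * q ^ (2 * j))) * (-b⁻¹ * q ^ 2) ^ n := by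
  obtain ⟨m, rfl⟩ := hk
  rw [show (m + m) / 2 = m by omega]
  rcases m.eq_zero_or_pos with rfl | hm
  · simp
  have hq2 : IsPrimitiveRoot (q ^ 2) m := hq.pow (by omega) (by ring)
  simp only [pow_mul, ← qPochhammer.eq_1]
  rw [sum_range_add_self_qPochhammer_mul_pow hq2.pow_eq_one, hq2.qPochhammer_self hm]

theorem truncation_split (k : ℕ) (q b : ℂ)
    (hq : IsPrimitiveRoot q k) (hk : Even k) (hb : b ≠ 0) (hbk : b ^ k ≠ 1) :
    ∑ n ∈ Finset.range k,
        (∏ j ∈ Finset.range n, (1 - b * q ^ (2 * j))) * (-b⁻¹ * q ^ 2) ^ n =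
      (1 + (-b⁻¹) ^ (k / 2) * (1 - b ^ (k / 2))) *
        ∑ n ∈ Finset.range (k / 2),
          (∏ j ∈ Finset.range n, (1 - b * q ^ (2 * j))) * (-b⁻¹ * q ^ 2) ^ n :=
  truncation_split_general k q b hq hk
end

section
/- As an identity of formal power series in q (equivalently, of holomorphic functions on |q|<1), Ramanujan's third order mock theta function ψ(q) := ∑_{n≥1} q^{n²}/(q;q²)_n equals ψ̃(q) := ∑_{n≥0} (-q²;q²)_n q^{n+1}, where (a;q²)_n := ∏_{j=0}^{n-1}(1 - a q^{2j}) and (q;q²)_n := ∏_{j=0}^{n-1}(1 - q^{2j+1}). -/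
/-!
Expanding `∏_{j<m} (1 + q^{2(j+1)}) = ∑_n e_n(q², q⁴, …, q^{2m})` turns the right-hand side into
the absolutely convergent double series `∑_m ∑_n q^{m+1} e_n(q², …, q^{2m})`. Summing over `m`
first, the column sums `C_n = ∑_m q^{m+1} e_n(q², …, q^{2m})` satisfy
`C_n = q^{2n+1} (C_n + C_{n-1})`: split `e_n(q², …, q^{2m+2})` according to whether the variable
`q²` is used, and note that `e_k(q⁴, …, q^{2m+2}) = q^{2k} e_k(q², …, q^{2m})`.
With `C_0 = q / (1 - q)` this gives `C_n = q^{(n+1)²} / (q; q²)_{n+1}`, the `n`-th term of `ψ`.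
-/

open Finset

section Algebra

variable {R : Type*} [CommSemiring R]

/-- `esymmEvenPow x n m = e_n(x², x⁴, …, x^{2m})`, by the recursion on the smallest variable. -/
def esymmEvenPow (x : R) : ℕ → ℕ → R
  | 0, _ => 1
  | _ + 1, 0 => 0
  | n + 1, m + 1 => x ^ (2 * (n + 1)) * (esymmEvenPow x (n + 1) m + esymmEvenPow x n m)

@[simp] lemma esymmEvenPow_zero_left (x : R) (m : ℕ) : esymmEvenPow x 0 m = 1 := by
  cases m <;> rfl

@[simp] lemma esymmEvenPow_succ_zero (x : R) (n : ℕ) : esymmEvenPow x (n + 1) 0 = 0 := rfl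

lemma esymmEvenPow_succ_succ (x : R) (n m : ℕ) :
    esymmEvenPow x (n + 1) (m + 1) =
      x ^ (2 * (n + 1)) * (esymmEvenPow x (n + 1) m + esymmEvenPow x n m) := rfl

lemma esymmEvenPow_eq_zero_of_lt (x : R) {n m : ℕ} (h : m < n) : esymmEvenPow x n m = 0 := by
  induction m generalizing n with
  | zero => obtain ⟨n, rfl⟩ := Nat.exists_eq_succ_of_ne_zero h.ne'; rfl
  | succ m ih =>
    obtain ⟨n, rfl⟩ := Nat.exists_eq_succ_of_ne_zero (by omega : n ≠ 0)
    rw [esymmEvenPow_succ_succ, ih (by omega), ih (by omega), add_zero, mul_zero]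

lemma prod_one_add_mul_pow_eq_sum (x z : R) (m : ℕ) :
    ∏ j ∈ range m, (1 + z * x ^ (2 * (j + 1))) =
      ∑ n ∈ range (m + 1), esymmEvenPow x n m * z ^ n := by
  induction m generalizing z with
  | zero => simp
  | succ m ih =>
    have hshift : ∀ j ∈ range m, 1 + z * x ^ (2 * (j + 1 + 1)) = 1 + z * x ^ 2 * x ^ (2 * (j + 1)) :=
      fun j _ => by ring
    calc ∏ j ∈ range (m + 1), (1 + z * x ^ (2 * (j + 1)))
        = (∑ n ∈ range (m + 1), esymmEvenPow x n m * (z * x ^ 2) ^ n) * (1 + z * x ^ 2) := by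
          rw [prod_range_succ', prod_congr rfl hshift, ih, zero_add, mul_one]
      _ = ∑ n ∈ range (m + 1), x ^ (2 * n) * esymmEvenPow x n m * z ^ n +
            ∑ n ∈ range (m + 1), x ^ (2 * (n + 1)) * esymmEvenPow x n m * z ^ (n + 1) := by
          rw [mul_add, mul_one, sum_mul]
          congr 1 <;> exact sum_congr rfl fun n _ => by ring
      _ = 1 + ∑ n ∈ range (m + 1), x ^ (2 * (n + 1)) * esymmEvenPow x (n + 1) m * z ^ (n + 1) +
            ∑ n ∈ range (m + 1), x ^ (2 * (n + 1)) * esymmEvenPow x n m * z ^ (n + 1) := by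
          rw [sum_range_succ' _ m,
            sum_range_succ (fun n => x ^ (2 * (n + 1)) * esymmEvenPow x (n + 1) m * z ^ (n + 1)),
            esymmEvenPow_eq_zero_of_lt x m.lt_succ_self]
          simp [add_comm]
      _ = ∑ n ∈ range (m + 1 + 1), esymmEvenPow x n (m + 1) * z ^ n := by
          rw [sum_range_succ' _ (m + 1)]
          simp only [esymmEvenPow_succ_succ, esymmEvenPow_zero_left, mul_add, add_mul,
            sum_add_distrib]
          ring

lemma prod_one_add_pow_eq_tsum [TopologicalSpace R] (x : R) (m : ℕ) :
    ∏ j ∈ range m, (1 + x ^ (2 * (j + 1))) = ∑' n, esymmEvenPow x n m := by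
  rw [tsum_eq_sum (s := range (m + 1)) fun n hn => esymmEvenPow_eq_zero_of_lt x (by simpa using hn)]
  simpa using prod_one_add_mul_pow_eq_sum x 1 m

end Algebra

lemma esymmEvenPow_nonneg {r : ℝ} (hr : 0 ≤ r) (n m : ℕ) : 0 ≤ esymmEvenPow r n m := by
  induction m generalizing n with
  | zero => cases n <;> simp
  | succ m ih =>
    cases n with
    | zero => simp
    | succ n => rw [esymmEvenPow_succ_succ]; have := ih n; have := ih (n + 1); positivity

lemma prod_one_add_pow_le_exp {r : ℝ} (h0 : 0 ≤ r) (h1 : r < 1) (m : ℕ) :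
    ∏ j ∈ range m, (1 + r ^ (2 * (j + 1))) ≤ Real.exp (1 - r)⁻¹ := by
  refine (Real.prod_one_add_le_exp_sum _ fun j => by positivity).trans (Real.exp_le_exp.2 ?_)
  calc ∑ j ∈ range m, r ^ (2 * (j + 1))
      ≤ ∑ j ∈ range m, r ^ j := sum_le_sum fun j _ => pow_le_pow_of_le_one h0 h1.le (by omega)
    _ ≤ ∑' j, r ^ j := Summable.sum_le_tsum _ (fun j _ => by positivity) (summable_geometric_of_lt_one h0 h1)
    _ = (1 - r)⁻¹ := tsum_geometric_of_lt_one h0 h1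

section Analysis

variable {K : Type*} [NormedField K]

lemma norm_esymmEvenPow_le (x : K) (n m : ℕ) : ‖esymmEvenPow x n m‖ ≤ esymmEvenPow ‖x‖ n m := by
  induction m generalizing n with
  | zero => cases n <;> simp
  | succ m ih =>
    cases n with
    | zero => simp
    | succ n =>
      rw [esymmEvenPow_succ_succ, esymmEvenPow_succ_succ, norm_mul, norm_pow]
      gcongr
      exact (norm_add_le _ _).trans (add_le_add (ih _) (ih _))

lemma one_sub_pow_ne_zero {x : K} (hx : ‖x‖ < 1) {k : ℕ} (hk : k ≠ 0) : 1 - x ^ k ≠ 0 := by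
  refine sub_ne_zero.2 fun h => ?_
  have := congrArg norm h
  rw [norm_one, norm_pow] at this
  exact (pow_lt_one₀ (norm_nonneg x) hx hk).ne' this

variable [CompleteSpace K] {x : K}

lemma summable_pow_mul_esymmEvenPow (hx : ‖x‖ < 1) :
    Summable fun p : ℕ × ℕ => x ^ (p.1 + 1) * esymmEvenPow x p.2 p.1 := by
  set r := ‖x‖
  have hr : 0 ≤ r := norm_nonneg x
  refine Summable.of_norm_bounded (g := fun p => r ^ (p.1 + 1) * esymmEvenPow r p.2 p.1) ?_
    fun p => ?_
  · refine (summable_prod_of_nonneg fun p => ?_).2 ⟨fun m => ?_, ?_⟩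
    · have := esymmEvenPow_nonneg hr p.2 p.1
      positivity
    · exact summable_of_ne_finset_zero (s := range (m + 1)) fun n hn => by
        rw [esymmEvenPow_eq_zero_of_lt r (by simpa using hn), mul_zero]
    · simp only [tsum_mul_left, ← prod_one_add_pow_eq_tsum]
      refine Summable.of_nonneg_of_le (fun m => ?_) (fun m => mul_le_mul_of_nonneg_left
        (prod_one_add_pow_le_exp hr hx m) (by positivity))
        (((summable_nat_add_iff 1).2 (summable_geometric_of_lt_one hr hx)).mul_right _)
      have := prod_nonneg fun j (_ : j ∈ range m) => (by positivity : 0 ≤ 1 + r ^ (2 * (j + 1)))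
      positivity
  · rw [norm_mul, norm_pow]
    exact mul_le_mul_of_nonneg_left (norm_esymmEvenPow_le x _ _) (by positivity)

lemma one_sub_pow_mul_tsum_pow_mul_esymmEvenPow_succ (hx : ‖x‖ < 1) (n : ℕ) :
    (1 - x ^ (2 * n + 3)) * ∑' m, x ^ (m + 1) * esymmEvenPow x (n + 1) m =
      x ^ (2 * n + 3) * ∑' m, x ^ (m + 1) * esymmEvenPow x n m := by
  have hcol (k : ℕ) : Summable fun m => x ^ (m + 1) * esymmEvenPow x k m :=
    (summable_pow_mul_esymmEvenPow hx).prod_symm.prod_factor k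
  have hrec : ∑' m, x ^ (m + 1) * esymmEvenPow x (n + 1) m =
      x ^ (2 * n + 3) * (∑' m, x ^ (m + 1) * esymmEvenPow x (n + 1) m +
        ∑' m, x ^ (m + 1) * esymmEvenPow x n m) := by
    rw [← (hcol (n + 1)).tsum_add (hcol n), ← tsum_mul_left, (hcol (n + 1)).tsum_eq_zero_add]
    simp only [esymmEvenPow_succ_zero, mul_zero, zero_add, esymmEvenPow_succ_succ]
    exact tsum_congr fun m => by ring
  linear_combination hrec

lemma tsum_pow_mul_esymmEvenPow (hx : ‖x‖ < 1) (n : ℕ) :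
    ∑' m, x ^ (m + 1) * esymmEvenPow x n m =
      x ^ ((n + 1) ^ 2) / ∏ j ∈ range (n + 1), (1 - x ^ (2 * j + 1)) := by
  induction n with
  | zero =>
    simp [pow_succ', tsum_mul_left, tsum_geometric_of_norm_lt_one hx, div_eq_mul_inv]
  | succ n ih =>
    have hfac := one_sub_pow_ne_zero hx (k := 2 * n + 3) (by omega)
    have hprod : ∏ j ∈ range (n + 1), (1 - x ^ (2 * j + 1)) ≠ 0 :=
      prod_ne_zero_iff.2 fun j _ => one_sub_pow_ne_zero hx (by omega)
    rw [← mul_right_inj' hfac, one_sub_pow_mul_tsum_pow_mul_esymmEvenPow_succ hx, ih,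
      prod_range_succ _ (n + 1), show 2 * (n + 1) + 1 = 2 * n + 3 by ring,
      show (n + 1 + 1) ^ 2 = (n + 1) ^ 2 + (2 * n + 3) by ring, pow_add x ((n + 1) ^ 2)]
    field_simp

end Analysis

theorem psi_alternate_representation (q : ℂ) (hq : ‖q‖ < 1) :
    ∑' n : ℕ, q ^ ((n + 1) ^ 2) / ∏ j ∈ Finset.range (n + 1), (1 - q ^ (2 * j + 1)) =
      ∑' n : ℕ, (∏ j ∈ Finset.range n, (1 + q ^ (2 * (j + 1)))) * q ^ (n + 1) := by
  calc _ = ∑' n, ∑' m, q ^ (m + 1) * esymmEvenPow q n m :=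
        tsum_congr fun n => (tsum_pow_mul_esymmEvenPow hq n).symm
    _ = ∑' m, ∑' n, q ^ (m + 1) * esymmEvenPow q n m :=
        (summable_pow_mul_esymmEvenPow hq).tsum_comm
    _ = _ := tsum_congr fun m => by rw [prod_one_add_pow_eq_tsum, mul_comm, tsum_mul_left]
end

section
/- As an identity of formal power series in q (equivalently, for |q|<1), Ramanujan's third order mock theta function φ(q) := ∑_{n≥0} q^{n²}/(-q²;q²)_n equals φ̃(q) := 1 + ∑_{n≥0} (q;q²)_n (-1)^n q^{2n+1}. -/
/-!
Expand the numerator of the `n`-th term of `φ̃` by Rothe's `q`-binomial theorem,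
`(q;q²)_n = ∑_k (-1)^k q^{k²} [n k]_{q²}`. This writes `φ̃ - 1` as the sum of the double
series `T(n, k) = (-1)^(n+k) q^(2n+1+k²) [n k]_{q²}`, which converges absolutely because
`|[n k]_{q²}| ≤ (1 - |q|²)^(-k)`. Summing the columns instead, the generating function
`∑_m t^m [m+k k]_Q = 1 / (t;Q)_{k+1}` at `t = -q²` turns the `k`-th column into
`q^((k+1)²) / (-q²;q²)_{k+1}`, the `(k+1)`-st term of `φ`.
-/

open Finset

section GaussBinom

variable {R : Type*}

-- `Q ^ (n - k)` truncates for `k > n`, harmlessly since then `gaussBinom Q n k = 0`.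
def gaussBinom [Semiring R] (Q : R) : ℕ → ℕ → R
  | _, 0 => 1
  | 0, _ + 1 => 0
  | n + 1, k + 1 => gaussBinom Q n (k + 1) + Q ^ (n - k) * gaussBinom Q n k

section Semiring

variable [Semiring R] (Q : R)

@[simp]
theorem gaussBinom_zero_right (n : ℕ) : gaussBinom Q n 0 = 1 := by
  cases n <;> rfl

theorem gaussBinom_succ_succ (n k : ℕ) :
    gaussBinom Q (n + 1) (k + 1) = gaussBinom Q n (k + 1) + Q ^ (n - k) * gaussBinom Q n k :=
  rfl

theorem gaussBinom_eq_zero_of_lt {n k : ℕ} (h : n < k) : gaussBinom Q n k = 0 := by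
  induction n generalizing k with
  | zero => obtain ⟨k, rfl⟩ := Nat.exists_eq_add_one_of_ne_zero h.ne'; rfl
  | succ n ih =>
    obtain ⟨k, rfl⟩ := Nat.exists_eq_add_one_of_ne_zero (by omega : k ≠ 0)
    rw [gaussBinom_succ_succ, ih (by omega), ih (by omega), mul_zero, add_zero]

theorem gaussBinom_succ_right_eq_sum (n k : ℕ) :
    gaussBinom Q n (k + 1) = ∑ i ∈ range (n - k), Q ^ i * gaussBinom Q (i + k) k := by
  induction n with
  | zero => rw [zero_tsub, sum_range_zero]; rfl
  | succ n ih =>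
    rcases le_or_gt k n with h | h
    · rw [gaussBinom_succ_succ, ih, show n + 1 - k = n - k + 1 by omega, sum_range_succ,
        Nat.sub_add_cancel h]
    · rw [gaussBinom_eq_zero_of_lt Q (by omega), show n + 1 - k = 0 by omega, sum_range_zero]

end Semiring

theorem Nat.two_mul_choose_two_add_self (k : ℕ) : 2 * k.choose 2 + k = k ^ 2 := by
  induction k with
  | zero => rfl
  | succ k ih => rw [Nat.choose_succ_succ', Nat.choose_one_right]; nlinarith

/-- Rothe's finite `q`-binomial theorem. -/
theorem prod_one_add_mul_pow_eq_sum_gaussBinom [CommSemiring R] (Q x : R) (n : ℕ) :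
    ∏ j ∈ range n, (1 + x * Q ^ j) =
      ∑ k ∈ range (n + 1), Q ^ k.choose 2 * x ^ k * gaussBinom Q n k := by
  induction n with
  | zero => simp
  | succ n ih =>
    have hTop : ∑ k ∈ range (n + 2), Q ^ k.choose 2 * x ^ k * gaussBinom Q n k =
        ∑ k ∈ range (n + 1), Q ^ k.choose 2 * x ^ k * gaussBinom Q n k := by
      rw [sum_range_succ, gaussBinom_eq_zero_of_lt Q (by omega), mul_zero, add_zero]
    have hShift : ∀ k ∈ range (n + 1), Q ^ (k + 1).choose 2 * x ^ (k + 1) * Q ^ (n - k) =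
        x * Q ^ n * (Q ^ k.choose 2 * x ^ k) := by
      intro k hk
      rw [Nat.choose_succ_succ', Nat.choose_one_right, mul_right_comm, ← pow_add,
        show k + k.choose 2 + (n - k) = n + k.choose 2 by grind, pow_add, pow_succ]
      ring
    calc ∏ j ∈ range (n + 1), (1 + x * Q ^ j)
        = (∑ k ∈ range (n + 1), Q ^ k.choose 2 * x ^ k * gaussBinom Q n k) *
            (1 + x * Q ^ n) := by
          rw [prod_range_succ, ih]
      _ = ∑ k ∈ range (n + 2), Q ^ k.choose 2 * x ^ k * gaussBinom Q n k +
            ∑ k ∈ range (n + 1), Q ^ (k + 1).choose 2 * x ^ (k + 1) * Q ^ (n - k) *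
              gaussBinom Q n k := by
          rw [hTop, mul_one_add, sum_mul]
          congr 1
          refine sum_congr rfl fun k hk ↦ ?_
          rw [hShift k hk]
          ring
      _ = ∑ k ∈ range (n + 2), Q ^ k.choose 2 * x ^ k * gaussBinom Q (n + 1) k := by
          rw [sum_range_succ' _ (n + 1), sum_range_succ' (fun k ↦ _ * gaussBinom Q (n + 1) k)]
          simp only [gaussBinom_succ_succ, mul_add, sum_add_distrib, gaussBinom_zero_right,
            ← mul_assoc]
          ring

def phiDoubleSeries [CommRing R] (q : R) (n k : ℕ) : R :=
  (-1) ^ (n + k) * q ^ (2 * n + 1 + k ^ 2) * gaussBinom (q ^ 2) n k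

theorem hasSum_phiDoubleSeries_row [CommRing R] [TopologicalSpace R] (q : R) (n : ℕ) :
    HasSum (fun k ↦ phiDoubleSeries q n k)
      ((∏ j ∈ range n, (1 - q ^ (2 * j + 1))) * (-1) ^ n * q ^ (2 * n + 1)) := by
  have hRothe := prod_one_add_mul_pow_eq_sum_gaussBinom (q ^ 2) (-q) n
  have hCoeff (k : ℕ) : (q ^ 2) ^ k.choose 2 * (-q) ^ k = (-1) ^ k * q ^ (k ^ 2) := by
    rw [neg_eq_neg_one_mul, mul_pow, ← pow_mul, ← Nat.two_mul_choose_two_add_self k, pow_add]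
    ring
  have hFactor :
      ∏ j ∈ range n, (1 - q ^ (2 * j + 1)) = ∏ j ∈ range n, (1 + -q * (q ^ 2) ^ j) :=
    prod_congr rfl fun j _ ↦ by ring
  have hZero : ∀ k ∉ range (n + 1), phiDoubleSeries q n k = 0 := fun k hk ↦ by
    rw [phiDoubleSeries, gaussBinom_eq_zero_of_lt _ (by simpa using hk), mul_zero]
  suffices hSum : (∏ j ∈ range n, (1 - q ^ (2 * j + 1))) * (-1) ^ n * q ^ (2 * n + 1) =
      ∑ k ∈ range (n + 1), phiDoubleSeries q n k by
    rw [hSum]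
    exact hasSum_sum_of_ne_finset_zero hZero
  rw [hFactor, hRothe, sum_mul, sum_mul]
  refine sum_congr rfl fun k _ ↦ ?_
  rw [phiDoubleSeries, hCoeff, pow_add, pow_add]
  ring

end GaussBinom

section Analytic

open Filter Topology

theorem summable_pow_sq_mul_pow {r : ℝ} (hr0 : 0 ≤ r) (hr : r < 1) (c : ℝ) :
    Summable fun n : ℕ ↦ r ^ (n ^ 2) * c ^ n := by
  have hlim : Tendsto (fun n : ℕ ↦ r ^ n * c) atTop (𝓝 0) := by
    simpa using (tendsto_pow_atTop_nhds_zero_of_lt_one hr0 hr).mul_const c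
  refine .of_norm_bounded_eventually_nat summable_geometric_two ?_
  filter_upwards [hlim.eventually (Metric.closedBall_mem_nhds 0 one_half_pos)] with n hn
  rw [dist_zero_right] at hn
  rw [sq, pow_mul, ← mul_pow, norm_pow]
  exact pow_le_pow_left₀ (norm_nonneg _) hn n

variable {R : Type*} [NormedRing R] [NormOneClass R] {Q : R}

theorem norm_gaussBinom_le (hQ : ‖Q‖ < 1) (n k : ℕ) :
    ‖gaussBinom Q n k‖ ≤ (1 - ‖Q‖)⁻¹ ^ k := by
  induction k generalizing n with
  | zero => simp
  | succ k ih =>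
    have hgeom : ∑ i ∈ range (n - k), ‖Q‖ ^ i ≤ (1 - ‖Q‖)⁻¹ := by
      simpa [← range_eq_Ico] using
        geom_sum_Ico_le_of_lt_one (m := 0) (n := n - k) (norm_nonneg Q) hQ
    rw [gaussBinom_succ_right_eq_sum, pow_succ']
    calc ‖∑ i ∈ range (n - k), Q ^ i * gaussBinom Q (i + k) k‖
        ≤ ∑ i ∈ range (n - k), ‖Q‖ ^ i * (1 - ‖Q‖)⁻¹ ^ k := by
          refine (norm_sum_le _ _).trans (sum_le_sum fun i _ ↦ ?_)
          exact (norm_mul_le _ _).trans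
            (mul_le_mul (norm_pow_le _ _) (ih _) (norm_nonneg _) (by positivity))
      _ = (∑ i ∈ range (n - k), ‖Q‖ ^ i) * (1 - ‖Q‖)⁻¹ ^ k := (sum_mul ..).symm
      _ ≤ (1 - ‖Q‖)⁻¹ * (1 - ‖Q‖)⁻¹ ^ k := by
          have : 0 ≤ 1 - ‖Q‖ := by linarith
          gcongr

theorem summable_pow_mul_gaussBinom [CompleteSpace R] {t : R} (hQ : ‖Q‖ < 1) (ht : ‖t‖ < 1)
    (j k : ℕ) : Summable fun m ↦ t ^ m * gaussBinom Q (m + j) k :=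
  .of_norm_bounded ((summable_geometric_of_lt_one (norm_nonneg t) ht).mul_right _) fun m ↦
    (norm_mul_le _ _).trans
      (mul_le_mul (norm_pow_le _ _) (norm_gaussBinom_le hQ _ _) (norm_nonneg _) (by positivity))

variable {𝕜 : Type*} [NormedField 𝕜]

theorem hasSum_pow_mul_gaussBinom [CompleteSpace 𝕜] {Q t : 𝕜} (hQ : ‖Q‖ < 1) (ht : ‖t‖ < 1)
    (k : ℕ) :
    HasSum (fun m ↦ t ^ m * gaussBinom Q (m + k) k)
      (∏ j ∈ range (k + 1), (1 - t * Q ^ j))⁻¹ := by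
  induction k generalizing t with
  | zero => simpa using hasSum_geometric_of_norm_lt_one ht
  | succ k ih =>
    have htQ : ‖t * Q‖ < 1 := by
      rw [norm_mul]; nlinarith [norm_nonneg t, norm_nonneg Q]
    obtain ⟨S, hS⟩ := summable_pow_mul_gaussBinom hQ ht (k + 1) (k + 1)
    -- Pascal's rule splits `S` into `t * S` plus the series of level `k` at `t * Q`.
    have hShift : HasSum (fun m ↦ t ^ m * gaussBinom Q (m + k) (k + 1)) (t * S) := by
      have hTail : HasSum (fun m ↦ t ^ (m + 1) * gaussBinom Q (m + 1 + k) (k + 1)) (t * S) :=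
        (hS.mul_left t).congr_fun fun m ↦ by
          rw [add_right_comm m 1 k, ← add_assoc, pow_succ]
          ring
      have h :=
        (hasSum_nat_add_iff (f := fun m ↦ t ^ m * gaussBinom Q (m + k) (k + 1)) 1).mp hTail
      rwa [sum_range_one, zero_add, gaussBinom_eq_zero_of_lt Q k.lt_succ_self, mul_zero,
        add_zero] at h
    have hPascal : HasSum (fun m ↦ t ^ m * gaussBinom Q (m + (k + 1)) (k + 1))
        (t * S + (∏ j ∈ range (k + 1), (1 - t * Q * Q ^ j))⁻¹) := by
      refine (hShift.add (ih htQ)).congr_fun fun m ↦ ?_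
      rw [← add_assoc, gaussBinom_succ_succ, Nat.add_sub_cancel, mul_pow]
      ring
    have h1t : 1 - t ≠ 0 := sub_ne_zero.mpr (by rintro rfl; simp at ht)
    have hProd : ∏ j ∈ range (k + 2), (1 - t * Q ^ j) =
        (∏ j ∈ range (k + 1), (1 - t * Q * Q ^ j)) * (1 - t) := by
      simp only [prod_range_succ' _ (k + 1), pow_succ', mul_assoc, pow_zero, mul_one]
    have hSol := hS.unique hPascal
    rw [hProd, mul_inv,
      ← (eq_mul_inv_iff_mul_eq₀ (a := S) h1t).mpr (by linear_combination hSol)]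
    exact hS

theorem hasSum_phiDoubleSeries_column [CompleteSpace 𝕜] {q : 𝕜} (hq : ‖q‖ < 1) (k : ℕ) :
    HasSum (fun n ↦ phiDoubleSeries q n k)
      (q ^ ((k + 1) ^ 2) / ∏ j ∈ range (k + 1), (1 + q ^ (2 * (j + 1)))) := by
  have hq2 : ‖q ^ 2‖ < 1 := by simpa using pow_lt_one₀ (norm_nonneg q) hq two_ne_zero
  have hGen := (hasSum_pow_mul_gaussBinom hq2 (t := -q ^ 2) (by rwa [norm_neg]) k).mul_left
    (q ^ ((k + 1) ^ 2))
  have hTail : HasSum (fun m ↦ phiDoubleSeries q (m + k) k)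
      (q ^ ((k + 1) ^ 2) / ∏ j ∈ range (k + 1), (1 + q ^ (2 * (j + 1)))) := by
    rw [div_eq_mul_inv, prod_congr rfl fun j _ ↦ show 1 + q ^ (2 * (j + 1)) =
      1 - -q ^ 2 * (q ^ 2) ^ j by ring]
    refine hGen.congr_fun fun m ↦ ?_
    rw [phiDoubleSeries, add_assoc, pow_add (-1 : 𝕜) m, ← two_mul, pow_mul, neg_one_sq,
      one_pow, show 2 * (m + k) + 1 + k ^ 2 = (k + 1) ^ 2 + 2 * m by ring, pow_add, pow_mul,
      neg_pow (q ^ 2)]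
    ring
  have hHead : ∑ n ∈ range k, phiDoubleSeries q n k = 0 :=
    sum_eq_zero fun n hn ↦ by
      rw [phiDoubleSeries, gaussBinom_eq_zero_of_lt _ (mem_range.mp hn), mul_zero]
  exact (hasSum_nat_add_iff' k).mp (by rwa [hHead, sub_zero])

theorem norm_phiDoubleSeries_le {q : 𝕜} (hq : ‖q‖ < 1) (n k : ℕ) :
    ‖phiDoubleSeries q n k‖ ≤ ‖q‖ ^ n * (‖q‖ ^ (k ^ 2) * (1 - ‖q ^ 2‖)⁻¹ ^ k) := by
  have hq2 : ‖q ^ 2‖ < 1 := by simpa using pow_lt_one₀ (norm_nonneg q) hq two_ne_zero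
  have hPow : ‖q‖ ^ (2 * n + 1 + k ^ 2) ≤ ‖q‖ ^ n * ‖q‖ ^ (k ^ 2) := by
    rw [← pow_add]
    exact pow_le_pow_of_le_one (norm_nonneg q) hq.le (by omega)
  rw [phiDoubleSeries, norm_mul, norm_mul, norm_pow, norm_neg, norm_one, one_pow, one_mul,
    norm_pow, ← mul_assoc]
  exact mul_le_mul hPow (norm_gaussBinom_le hq2 n k) (norm_nonneg _) (by positivity)

theorem summable_phiDoubleSeries [CompleteSpace 𝕜] {q : 𝕜} (hq : ‖q‖ < 1) :
    Summable fun p : ℕ × ℕ ↦ phiDoubleSeries q p.1 p.2 := by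
  have hq2 : ‖q ^ 2‖ < 1 := by simpa using pow_lt_one₀ (norm_nonneg q) hq two_ne_zero
  have hc : 0 ≤ (1 - ‖q ^ 2‖)⁻¹ := inv_nonneg.mpr (by linarith)
  refine .of_norm_bounded ?_ fun p ↦ norm_phiDoubleSeries_le hq p.1 p.2
  exact (summable_geometric_of_lt_one (norm_nonneg q) hq).mul_of_nonneg
    (summable_pow_sq_mul_pow (norm_nonneg q) hq _) (fun _ ↦ by positivity)
    (fun k ↦ mul_nonneg (by positivity) (pow_nonneg hc k))

end Analytic

theorem phi_alternate_representation (q : ℂ) (hq : ‖q‖ < 1) :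
    ∑' n : ℕ, q ^ (n ^ 2) / ∏ j ∈ Finset.range n, (1 + q ^ (2 * (j + 1))) =
      1 + ∑' n : ℕ,
        (∏ j ∈ Finset.range n, (1 - q ^ (2 * j + 1))) * (-1) ^ n * q ^ (2 * n + 1) := by
  obtain ⟨s, hs⟩ := summable_phiDoubleSeries hq
  have hRows := hs.prod_fiberwise (hasSum_phiDoubleSeries_row q)
  have hCols := ((Equiv.prodComm ℕ ℕ).hasSum_iff.mpr hs).prod_fiberwise
    (hasSum_phiDoubleSeries_column hq)
  have hPhi := (hasSum_nat_add_iff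
    (f := fun n ↦ q ^ (n ^ 2) / ∏ j ∈ Finset.range n, (1 + q ^ (2 * (j + 1)))) 1).mp hCols
  rw [hPhi.tsum_eq, hRows.tsum_eq, sum_range_one]
  simp [add_comm]
end

section
/- As an identity of formal power series in q (equivalently, for |q|<1), Ramanujan's third order mock theta function ν(q) := ∑_{n≥0} q^{n²+n}/(-q;q²)_{n+1} equals ν̃(q) := ∑_{n≥0} (q;q²)_n (-1)^n q^n, where (-q;q²)_{n+1} := ∏_{j=0}^{n}(1 + q^{2j+1}) and (q;q²)_n := ∏_{j=0}^{n-1}(1 - q^{2j+1}). -/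
/-!
Put `F x := ∑ₙ q^(n²+n) xⁿ / (-q;q²)_{n+1}`, so that `ν(q) = F 1`. Multiplying the `n`-th term of
`F x + q F (q² x)` by `1 + q^(2n+1)` cancels the last factor of its denominator, and shifting the
index gives the functional equation `F x = 1 - q (1 - q x) F (q² x)`. Iterated at `x = q^(2k)` it
writes `ν(q)` as a partial sum of `ν̃(q)` plus the remainder `(-1)^K q^K (q;q²)_K F (q^(2K))`, which
tends to zero: `F` is bounded on the closed unit disc and `(q;q²)_K` is bounded uniformly in `K`.
-/

open Finset Filter Topology

theorem Summable.tsum_eq_of_sub_succ {E : Type*} [AddCommGroup E] [TopologicalSpace E]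
    [IsTopologicalAddGroup E] [T2Space E] {f R : ℕ → E} (hf : Summable f)
    (hR : Tendsto R atTop (𝓝 0)) (h : ∀ k, R k - R (k + 1) = f k) : ∑' k, f k = R 0 := by
  have partial_sum : ∀ K, ∑ k ∈ range K, f k = R 0 - R K := fun K => by
    rw [← sum_range_sub']
    exact sum_congr rfl fun k _ => (h k).symm
  refine tendsto_nhds_unique hf.hasSum.tendsto_sum_nat ?_
  simpa [partial_sum] using hR.const_sub (R 0)

theorem summable_pow_self_of_tendsto_zero {a : ℕ → ℝ} (ha : Tendsto a atTop (𝓝 0)) :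
    Summable fun n => a n ^ n := by
  refine .of_norm_bounded_eventually_nat summable_geometric_two ?_
  filter_upwards [ha.norm.eventually (ge_mem_nhds (by norm_num : ‖(0 : ℝ)‖ < 1 / 2))] with n hn
  rw [norm_pow]
  exact pow_le_pow_left₀ (norm_nonneg _) hn n

/-- `(-q;q²)_n` -/
noncomputable def negOddQPochhammer (q : ℂ) (n : ℕ) : ℂ := ∏ j ∈ range n, (1 + q ^ (2 * j + 1))

/-- `(q;q²)_n` -/
noncomputable def oddQPochhammer (q : ℂ) (n : ℕ) : ℂ := ∏ j ∈ range n, (1 - q ^ (2 * j + 1))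

theorem negOddQPochhammer_succ (q : ℂ) (n : ℕ) :
    negOddQPochhammer q (n + 1) = negOddQPochhammer q n * (1 + q ^ (2 * n + 1)) :=
  prod_range_succ _ _

theorem oddQPochhammer_succ (q : ℂ) (n : ℕ) :
    oddQPochhammer q (n + 1) = oddQPochhammer q n * (1 - q ^ (2 * n + 1)) :=
  prod_range_succ _ _

noncomputable def nuMajorant (r : ℝ) (n : ℕ) : ℝ := (1 - r)⁻¹ * (r ^ (n + 1) / (1 - r)) ^ n

noncomputable def nuSeries (q x : ℂ) : ℂ :=
  ∑' n : ℕ, q ^ (n ^ 2 + n) * x ^ n / negOddQPochhammer q (n + 1)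

noncomputable def nuRemainder (q : ℂ) (K : ℕ) : ℂ :=
  (-1) ^ K * q ^ K * oddQPochhammer q K * nuSeries q (q ^ (2 * K))

section
variable {q : ℂ}

theorem pow_le_norm_negOddQPochhammer (hq : ‖q‖ < 1) (n : ℕ) :
    (1 - ‖q‖) ^ n ≤ ‖negOddQPochhammer q n‖ := by
  rw [negOddQPochhammer, norm_prod]
  calc (1 - ‖q‖) ^ n = ∏ _j ∈ range n, (1 - ‖q‖) := by simp
    _ ≤ ∏ j ∈ range n, ‖1 + q ^ (2 * j + 1)‖ := by
      refine prod_le_prod (fun _ _ => by linarith) fun j _ => ?_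
      have h_pow : ‖q‖ ^ (2 * j + 1) ≤ ‖q‖ := pow_le_of_le_one (norm_nonneg q) hq.le (by omega)
      have h_tri := norm_sub_norm_le 1 (-q ^ (2 * j + 1))
      rw [norm_one, norm_neg, norm_pow, sub_neg_eq_add] at h_tri
      linarith

theorem negOddQPochhammer_ne_zero (hq : ‖q‖ < 1) (n : ℕ) : negOddQPochhammer q n ≠ 0 :=
  norm_pos_iff.1 <| (pow_pos (by linarith) n).trans_le (pow_le_norm_negOddQPochhammer hq n)

theorem norm_oddQPochhammer_le (hq : ‖q‖ < 1) (n : ℕ) :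
    ‖oddQPochhammer q n‖ ≤ Real.exp (1 - ‖q‖)⁻¹ := by
  have hr : 0 ≤ ‖q‖ := norm_nonneg q
  rw [oddQPochhammer, norm_prod]
  calc ∏ j ∈ range n, ‖1 - q ^ (2 * j + 1)‖ ≤ ∏ j ∈ range n, (1 + ‖q‖ ^ j) := by
        refine prod_le_prod (fun _ _ => norm_nonneg _) fun j _ => ?_
        calc ‖1 - q ^ (2 * j + 1)‖ ≤ 1 + ‖q‖ ^ (2 * j + 1) := by
              simpa using norm_sub_le (1 : ℂ) (q ^ (2 * j + 1))
          _ ≤ 1 + ‖q‖ ^ j := by gcongr 1 + ?_; exact pow_le_pow_of_le_one hr hq.le (by omega)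
    _ ≤ Real.exp (∑ j ∈ range n, ‖q‖ ^ j) := Real.prod_one_add_le_exp_sum _ fun j => by positivity
    _ ≤ Real.exp (1 - ‖q‖)⁻¹ := by
        rw [Real.exp_le_exp, ← tsum_geometric_of_lt_one hr hq]
        exact (summable_geometric_of_lt_one hr hq).sum_le_tsum _ fun j _ => by positivity

theorem norm_nuSeries_term_le (hq : ‖q‖ < 1) {x : ℂ} (hx : ‖x‖ ≤ 1) (n : ℕ) :
    ‖q ^ (n ^ 2 + n) * x ^ n / negOddQPochhammer q (n + 1)‖ ≤ nuMajorant ‖q‖ n := by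
  have hr : 0 < 1 - ‖q‖ := by linarith
  rw [norm_div, norm_mul, norm_pow, norm_pow]
  calc ‖q‖ ^ (n ^ 2 + n) * ‖x‖ ^ n / ‖negOddQPochhammer q (n + 1)‖
      ≤ ‖q‖ ^ (n ^ 2 + n) * 1 / (1 - ‖q‖) ^ (n + 1) := by
        gcongr
        · exact pow_le_one₀ (norm_nonneg x) hx
        · exact pow_le_norm_negOddQPochhammer hq (n + 1)
    _ = nuMajorant ‖q‖ n := by
        rw [nuMajorant, div_pow, ← pow_mul]
        field_simp
        ring

theorem summable_nuMajorant (hq : ‖q‖ < 1) : Summable (nuMajorant ‖q‖) := by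
  refine (summable_pow_self_of_tendsto_zero ?_).mul_left _
  have h :=
    (tendsto_pow_atTop_nhds_zero_of_lt_one (norm_nonneg q) hq).comp (tendsto_add_atTop_nat 1)
  simpa using h.div_const (1 - ‖q‖)

theorem summable_nuSeries_term (hq : ‖q‖ < 1) {x : ℂ} (hx : ‖x‖ ≤ 1) :
    Summable fun n : ℕ => q ^ (n ^ 2 + n) * x ^ n / negOddQPochhammer q (n + 1) :=
  .of_norm_bounded (summable_nuMajorant hq) (norm_nuSeries_term_le hq hx)

theorem norm_nuSeries_le (hq : ‖q‖ < 1) {x : ℂ} (hx : ‖x‖ ≤ 1) :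
    ‖nuSeries q x‖ ≤ ∑' n, nuMajorant ‖q‖ n :=
  tsum_of_norm_bounded (summable_nuMajorant hq).hasSum (norm_nuSeries_term_le hq hx)

theorem nuSeries_eq_one_sub (hq : ‖q‖ < 1) {x : ℂ} (hx : ‖x‖ ≤ 1) :
    nuSeries q x = 1 - q * (1 - q * x) * nuSeries q (q ^ 2 * x) := by
  have hx' : ‖q ^ 2 * x‖ ≤ 1 := by
    rw [norm_mul, norm_pow]
    exact mul_le_one₀ (pow_le_one₀ (norm_nonneg q) hq.le) (norm_nonneg x) hx
  set t : ℂ → ℕ → ℂ := fun y n => q ^ (n ^ 2 + n) * y ^ n / negOddQPochhammer q (n + 1)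
  set s : ℕ → ℂ := fun n => q ^ (n ^ 2 + n) * x ^ n / negOddQPochhammer q n
  have hD := negOddQPochhammer_ne_zero hq
  have h_add : ∀ n, t x n + q * t (q ^ 2 * x) n = s n := fun n => by
    obtain ⟨hDn, h_factor⟩ := mul_ne_zero_iff.1 (negOddQPochhammer_succ q n ▸ hD (n + 1))
    simp only [t, s, negOddQPochhammer_succ]
    field_simp
    ring
  have h_shift : ∀ n, s (n + 1) = q ^ 2 * x * t (q ^ 2 * x) n := fun n => by
    simp only [t, s]
    field_simp [hD (n + 1)]
    ring
  have ht := summable_nuSeries_term hq hx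
  have ht' := (summable_nuSeries_term hq hx').mul_left q
  have h_sum :
      nuSeries q x + q * nuSeries q (q ^ 2 * x) = 1 + q ^ 2 * x * nuSeries q (q ^ 2 * x) := by
    calc nuSeries q x + q * nuSeries q (q ^ 2 * x) = ∑' n, s n := by
          rw [nuSeries, nuSeries, ← tsum_mul_left, ← ht.tsum_add ht']
          exact tsum_congr h_add
      _ = 1 + q ^ 2 * x * nuSeries q (q ^ 2 * x) := by
          rw [(ht.add ht').congr h_add |>.tsum_eq_zero_add, tsum_congr h_shift, tsum_mul_left]
          congr 1
          simp [s, negOddQPochhammer]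
  linear_combination h_sum

theorem nuRemainder_sub_succ (hq : ‖q‖ < 1) (K : ℕ) :
    nuRemainder q K - nuRemainder q (K + 1) = oddQPochhammer q K * (-1) ^ K * q ^ K := by
  have h_step : nuSeries q (q ^ (2 * K)) =
      1 - q * (1 - q ^ (2 * K + 1)) * nuSeries q (q ^ (2 * (K + 1))) := by
    rw [nuSeries_eq_one_sub hq ((norm_pow q _).le.trans (pow_le_one₀ (norm_nonneg q) hq.le))]
    ring_nf
  rw [nuRemainder, nuRemainder, oddQPochhammer_succ, h_step]
  ring

theorem tendsto_nuRemainder_zero (hq : ‖q‖ < 1) : Tendsto (nuRemainder q) atTop (𝓝 0) := by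
  set C := Real.exp (1 - ‖q‖)⁻¹ * ∑' n, nuMajorant ‖q‖ n
  refine squeeze_zero_norm (a := fun K => C * ‖q‖ ^ K) (fun K => ?_) ?_
  · have hx : ‖q ^ (2 * K)‖ ≤ 1 := (norm_pow q _).le.trans (pow_le_one₀ (norm_nonneg q) hq.le)
    rw [nuRemainder, norm_mul, norm_mul, norm_mul, norm_pow, norm_pow, norm_neg, norm_one, one_pow,
      one_mul]
    calc ‖q‖ ^ K * ‖oddQPochhammer q K‖ * ‖nuSeries q (q ^ (2 * K))‖
        ≤ ‖q‖ ^ K * Real.exp (1 - ‖q‖)⁻¹ * ∑' n, nuMajorant ‖q‖ n := by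
          gcongr
          exacts [norm_oddQPochhammer_le hq K, norm_nuSeries_le hq hx]
      _ = C * ‖q‖ ^ K := by ring
  · simpa using (tendsto_pow_atTop_nhds_zero_of_lt_one (norm_nonneg q) hq).const_mul C

theorem summable_oddQPochhammer_mul_pow (hq : ‖q‖ < 1) :
    Summable fun k => oddQPochhammer q k * (-1) ^ k * q ^ k := by
  refine .of_norm_bounded
    ((summable_geometric_of_lt_one (norm_nonneg q) hq).mul_left (Real.exp (1 - ‖q‖)⁻¹)) fun k => ?_
  rw [norm_mul, norm_mul, norm_pow, norm_pow, norm_neg, norm_one, one_pow, mul_one]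
  gcongr
  exact norm_oddQPochhammer_le hq k

end

theorem nu_alternate_representation (q : ℂ) (hq : ‖q‖ < 1) :
    ∑' n : ℕ, q ^ (n ^ 2 + n) / ∏ j ∈ Finset.range (n + 1), (1 + q ^ (2 * j + 1)) =
      ∑' n : ℕ, (∏ j ∈ Finset.range n, (1 - q ^ (2 * j + 1))) * (-1) ^ n * q ^ n := by
  calc _ = nuSeries q 1 := by simp [nuSeries, negOddQPochhammer]
    _ = nuRemainder q 0 := by simp [nuRemainder, oddQPochhammer]
    _ = _ := ((summable_oddQPochhammer_mul_pow hq).tsum_eq_of_sub_succ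
          (tendsto_nuRemainder_zero hq) (nuRemainder_sub_succ hq)).symm
end
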